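/- Let 3/2 < q < ∞ and M > 0. For every η > 0 there exists a constant C > 0, depending only on q, M and η, such that for every measurable ρ : ℝ³ → ℝ with 0 ≤ ρ ≤ M and every nonnegative compactly supported C¹ function θ : ℝ³ → ℝ: ∫ ρ θ³ dx ≤ C ‖θ‖_{L^q}^{2q/(2q−3)} ‖√ρ θ‖_{L²}² + η ‖∇θ‖_{L²}². -/

import Mathlib

open MeasureTheory
open scoped RealInnerProductSpace ENNReal NNReal

noncomputable section

abbrev E3 : Type := EuclideanSpace ℝ (Fin 3)

/-- `i`-th standard basis vector of `ℝ³`. -/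
def e3 (i : Fin 3) : E3 := EuclideanSpace.single i (1 : ℝ)

/-- Gradient of a scalar function on `ℝ³`. -/
def grad3 (f : E3 → ℝ) (x : E3) : E3 := WithLp.toLp 2 (fun i => fderiv ℝ f x (e3 i))

/-- Divergence of a vector field on `ℝ³`. -/
def div3 (u : E3 → E3) (x : E3) : ℝ := ∑ i, fderiv ℝ u x (e3 i) i

/-- Jacobian entry `∂_j u_i`. -/
def jac3 (u : E3 → E3) (x : E3) (i j : Fin 3) : ℝ := fderiv ℝ u x (e3 j) i

/-- Squared Frobenius norm of the Jacobian, `|∇u|²`. -/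
def gradSq3 (u : E3 → E3) (x : E3) : ℝ := ∑ i, ∑ j, (jac3 u x i j) ^ 2

/-- Squared Euclidean norm of the gradient of a scalar function, `|∇f|²`. -/
def gradNormSq3 (f : E3 → ℝ) (x : E3) : ℝ := ∑ i, (fderiv ℝ f x (e3 i)) ^ 2

/-- Laplacian of a scalar function on `ℝ³`. -/
def lap3 (f : E3 → ℝ) (x : E3) : ℝ :=
  ∑ i, fderiv ℝ (fun y => fderiv ℝ f y (e3 i)) x (e3 i)

/-- Componentwise Laplacian of a vector field on `ℝ³`. -/
def lapVec3 (u : E3 → E3) (x : E3) : E3 := WithLp.toLp 2 (fun i => lap3 (fun y => u y i) x)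

/-- The full compressible Navier–Stokes system, pointwise at `(t, x)`. -/
def NSEq (μ lam κ R cv : ℝ) (ρ : ℝ → E3 → ℝ) (u : ℝ → E3 → E3) (θ : ℝ → E3 → ℝ)
    (t : ℝ) (x : E3) : Prop :=
  (deriv (fun τ => ρ τ x) t + div3 (fun y => ρ t y • u t y) x = 0) ∧
  (ρ t x • deriv (fun τ => u τ x) t + ρ t x • fderiv ℝ (u t) x (u t x)
      + grad3 (fun y => R * ρ t y * θ t y) x
    = μ • lapVec3 (u t) x + (μ + lam) • grad3 (div3 (u t)) x) ∧
  (cv * (ρ t x * deriv (fun τ => θ τ x) t + ρ t x * fderiv ℝ (θ t) x (u t x))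
      + R * ρ t x * θ t x * div3 (u t) x - κ * lap3 (θ t) x
    = μ / 2 * (∑ i, ∑ j, (jac3 (u t) x i j + jac3 (u t) x j i) ^ 2)
      + lam * (div3 (u t) x) ^ 2)

/-- Material derivative `u̇ = ∂ₜ u + (u·∇)u`. -/
def udot (u : ℝ → E3 → E3) (t : ℝ) (x : E3) : E3 :=
  deriv (fun τ => u τ x) t + fderiv ℝ (u t) x (u t x)

/-- `L^r` norm (finite exponent) of a scalar function on `ℝ³`. -/
def Lq3 (f : E3 → ℝ) (r : ℝ) : ℝ := (∫ x : E3, |f x| ^ r) ^ (1 / r)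

/-- `L^∞` norm of a scalar function on `ℝ³`. -/
def Linf3 (f : E3 → ℝ) : ℝ := (eLpNorm f ⊤ volume).toReal

/-- A classical solution of the full compressible Navier–Stokes system on `[0,T]`:
smooth, `ρ, θ ≥ 0` on the time slab, `u(t,·)` and `θ(t,·)` supported in a fixed
compact set, and the equations hold pointwise for `t ∈ [0,T]`. -/
structure IsClassicalSol (μ lam κ R cv T : ℝ)
    (ρ : ℝ → E3 → ℝ) (u : ℝ → E3 → E3) (θ : ℝ → E3 → ℝ) : Prop where
  smooth_rho : ContDiff ℝ (⊤ : ℕ∞) fun p : ℝ × E3 => ρ p.1 p.2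
  smooth_u : ContDiff ℝ (⊤ : ℕ∞) fun p : ℝ × E3 => u p.1 p.2
  smooth_theta : ContDiff ℝ (⊤ : ℕ∞) fun p : ℝ × E3 => θ p.1 p.2
  rho_nonneg : ∀ t ∈ Set.Icc 0 T, ∀ x, 0 ≤ ρ t x
  theta_nonneg : ∀ t ∈ Set.Icc 0 T, ∀ x, 0 ≤ θ t x
  compact_support : ∃ K : Set E3, IsCompact K ∧
      ∀ t ∈ Set.Icc 0 T, ∀ x ∉ K, u t x = 0 ∧ θ t x = 0
  eqs : ∀ t ∈ Set.Icc 0 T, ∀ x, NSEq μ lam κ R cv ρ u θ t x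


section AuxRhoTheta

open scoped ENNReal NNReal

private lemma opnorm_sq_eq' (L : E3 →L[ℝ] ℝ) : ‖L‖ ^ 2 = ∑ i, (L (e3 i)) ^ 2 := by
  set v := (InnerProductSpace.toDual ℝ E3).symm L with hv
  have hnorm : ‖L‖ = ‖v‖ := ((InnerProductSpace.toDual ℝ E3).symm.norm_map L).symm
  have happ : ∀ i, L (e3 i) = v i := by
    intro i
    have h1 : (inner ℝ v (e3 i) : ℝ) = L (e3 i) := InnerProductSpace.toDual_symm_apply
    have h2 : (inner ℝ v (EuclideanSpace.single i (1:ℝ)) : ℝ) = 1 * (starRingEnd ℝ) (v i) :=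
      EuclideanSpace.inner_single_right i 1 v
    simp only [e3] at h1
    rw [h2] at h1
    simpa [e3] using h1.symm
  rw [hnorm, EuclideanSpace.norm_eq, Real.sq_sqrt (by positivity)]
  simp [happ]

private lemma grad_integral_eq' (θ : E3 → ℝ) :
    (∫ x : E3, ‖fderiv ℝ θ x‖ ^ (2:ℝ)) = ∫ x : E3, gradNormSq3 θ x := by
  refine integral_congr_ae (Filter.Eventually.of_forall fun x => ?_)
  show ‖fderiv ℝ θ x‖ ^ (2:ℝ) = _
  rw [show ((2:ℝ)) = ((2:ℕ):ℝ) by norm_num, Real.rpow_natCast, opnorm_sq_eq']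
  rfl

private lemma sobolev6' : ∃ S : ℝ, 0 < S ∧ ∀ θ : E3 → ℝ, ContDiff ℝ 1 θ → HasCompactSupport θ →
    (∫ x : E3, ‖θ x‖ ^ (6:ℝ)) ^ ((6:ℝ)⁻¹)
      ≤ S * (∫ x : E3, gradNormSq3 θ x) ^ ((2:ℝ)⁻¹) := by
  set K : ℝ≥0 := eLpNormLESNormFDerivOfEqInnerConst (volume : Measure E3) 2 with hK
  refine ⟨(K:ℝ) + 1, by positivity, fun θ hθ h2θ => ?_⟩
  have hfin : Module.finrank ℝ E3 = 3 := finrank_euclideanSpace_fin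
  have hsob := eLpNorm_le_eLpNorm_fderiv_of_eq_inner (μ := (volume : Measure E3))
    (u := θ) hθ h2θ (p := 2) (p' := 6) (by norm_num) (by rw [hfin]; norm_num)
    (by rw [hfin]; norm_num)
  have m6 : MemLp θ (((6:ℝ≥0)):ℝ≥0∞) volume :=
    hθ.continuous.memLp_of_hasCompactSupport h2θ
  have mdf : MemLp (fderiv ℝ θ) (((2:ℝ≥0)):ℝ≥0∞) volume :=
    (hθ.continuous_fderiv one_ne_zero).memLp_of_hasCompactSupport (h2θ.fderiv (𝕜 := ℝ))
  have e6 : eLpNorm θ (((6:ℝ≥0)):ℝ≥0∞) volume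
      = ENNReal.ofReal ((∫ x : E3, ‖θ x‖ ^ (6:ℝ)) ^ ((6:ℝ)⁻¹)) := by
    have := m6.eLpNorm_eq_integral_rpow_norm (by norm_num) (by norm_num)
    simpa using this
  have edf : eLpNorm (fderiv ℝ θ) (((2:ℝ≥0)):ℝ≥0∞) volume
      = ENNReal.ofReal ((∫ x : E3, gradNormSq3 θ x) ^ ((2:ℝ)⁻¹)) := by
    have := mdf.eLpNorm_eq_integral_rpow_norm (by norm_num) (by norm_num)
    rw [← grad_integral_eq' θ]
    simpa using this
  rw [e6, edf] at hsob
  have hGnn : (0:ℝ) ≤ ∫ x : E3, gradNormSq3 θ x :=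
    integral_nonneg fun x => Finset.sum_nonneg fun i _ => sq_nonneg _
  have hBnn : (0:ℝ) ≤ (∫ x : E3, gradNormSq3 θ x) ^ ((2:ℝ)⁻¹) := Real.rpow_nonneg hGnn _
  have : ENNReal.ofReal ((∫ x : E3, ‖θ x‖ ^ (6:ℝ)) ^ ((6:ℝ)⁻¹))
      ≤ ENNReal.ofReal ((K:ℝ) * ((∫ x : E3, gradNormSq3 θ x) ^ ((2:ℝ)⁻¹))) := by
    rwa [ENNReal.ofReal_mul (by positivity), ENNReal.ofReal_coe_nnreal]
  have h := (ENNReal.ofReal_le_ofReal_iff (by positivity)).mp this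
  nlinarith [hBnn]

end AuxRhoTheta

/-- for `3/2 < q < ∞`, `M > 0` and any `η > 0` there is `C > 0`
(depending only on `q, M, η`) such that for all `0 ≤ ρ ≤ M` measurable and `θ ≥ 0`
compactly supported `C¹`:
`∫ ρθ³ ≤ C ‖θ‖_q^{2q/(2q−3)} ‖√ρ θ‖₂² + η ‖∇θ‖₂²`. -/
theorem rho_theta_cubed_estimate (q M : ℝ) (hq : 3 / 2 < q) (hM : 0 < M) :
    ∀ η > 0, ∃ C > 0, ∀ ρ θ : E3 → ℝ,
      Measurable ρ → (∀ x, 0 ≤ ρ x) → (∀ x, ρ x ≤ M) →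
      ContDiff ℝ 1 θ → HasCompactSupport θ → (∀ x, 0 ≤ θ x) →
      ∫ x : E3, ρ x * θ x ^ 3
        ≤ C * Lq3 θ q ^ (2 * q / (2 * q - 3)) * (∫ x : E3, ρ x * θ x ^ 2)
          + η * ∫ x : E3, gradNormSq3 θ x := by
  intro η hη
  have hq0 : (0:ℝ) < q := by linarith
  set b : ℝ := 3 / (2 * q) with hbdef
  have hb0 : 0 < b := by positivity
  have hb1 : b < 1 := by
    rw [hbdef, div_lt_one (by linarith)]; linarith
  set a : ℝ := 1 - b with hadef
  have ha0 : 0 < a := by simp only [hadef]; linarith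
  have ha1 : a < 1 := by simp only [hadef]; linarith
  have hab : a + b = 1 := by simp only [hadef]; ring
  obtain ⟨S, hS0, hsob⟩ := sobolev6'
  set c : ℝ := (b / η) ^ b with hcdef
  have hc0 : 0 < c := Real.rpow_pos_of_pos (by positivity) _
  set e : ℝ := 1 + 3 / q with hedef
  have he0 : 0 < e := by positivity
  refine ⟨a * c ^ (1/a) * M ^ (b/a) * S ^ (3/(q*a)),
    mul_pos (mul_pos (mul_pos ha0 (Real.rpow_pos_of_pos hc0 _))
      (Real.rpow_pos_of_pos hM _)) (Real.rpow_pos_of_pos hS0 _), ?_⟩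
  intro ρ θ hρm hρ0 hρM hθC hθsupp hθ0
  set C : ℝ := a * c ^ (1/a) * M ^ (b/a) * S ^ (3/(q*a)) with hCdef
  have hθcont := hθC.continuous
  -- basic quantities
  set B : ℝ := ∫ x : E3, ρ x * θ x ^ 2 with hBdef
  set Iq : ℝ := ∫ x : E3, θ x ^ q with hIqdef
  set I6 : ℝ := ∫ x : E3, θ x ^ (6:ℝ) with hI6def
  set G : ℝ := ∫ x : E3, gradNormSq3 θ x with hGdef
  set J : ℝ := ∫ x : E3, θ x ^ (2*q/3 + 2) with hJdef
  have hB0 : 0 ≤ B := integral_nonneg fun x => mul_nonneg (hρ0 x) (sq_nonneg _)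
  have hIq0 : 0 ≤ Iq := integral_nonneg fun x => Real.rpow_nonneg (hθ0 x) _
  have hI60 : 0 ≤ I6 := integral_nonneg fun x => Real.rpow_nonneg (hθ0 x) _
  have hG0 : 0 ≤ G :=
    integral_nonneg fun x => Finset.sum_nonneg fun i _ => sq_nonneg _
  have hJ0 : 0 ≤ J := integral_nonneg fun x => Real.rpow_nonneg (hθ0 x) _
  -- Lq3 rewrite
  have hLq : Lq3 θ q = Iq ^ (1/q) := by
    unfold Lq3
    rw [hIqdef]
    congr 1
    refine integral_congr_ae (Filter.Eventually.of_forall fun x => ?_)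
    simp [abs_of_nonneg (hθ0 x)]
  have hLq0 : 0 ≤ Iq ^ (1/q) := Real.rpow_nonneg hIq0 _
  -- auxiliary: powers of θ are continuous, compactly supported, in every Lp
  have hpowcont : ∀ κ : ℝ, 0 < κ → Continuous (fun x => θ x ^ κ) := fun κ hκ =>
    hθcont.rpow_const (fun x => Or.inr hκ.le)
  have hpowsupp : ∀ κ : ℝ, 0 < κ → HasCompactSupport (fun x => θ x ^ κ) := fun κ hκ =>
    hθsupp.comp_left (g := fun y : ℝ => y ^ κ) (Real.zero_rpow hκ.ne')
  have hpowmem : ∀ (κ : ℝ), 0 < κ → ∀ (p : ℝ≥0∞), MemLp (fun x => θ x ^ κ) p volume :=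
    fun κ hκ p => (hpowcont κ hκ).memLp_of_hasCompactSupport (hpowsupp κ hκ)
  -- the two Hoelder factors
  set f : E3 → ℝ := fun x => (ρ x * θ x ^ 2) ^ a with hfdef
  set g : E3 → ℝ := fun x => θ x ^ e with hgdef
  have hf0 : ∀ x, 0 ≤ f x := fun x =>
    Real.rpow_nonneg (mul_nonneg (hρ0 x) (sq_nonneg _)) _
  have hg0 : ∀ x, 0 ≤ g x := fun x => Real.rpow_nonneg (hθ0 x) _
  have hfmeas : Measurable f :=
    (Real.continuous_rpow_const ha0.le).measurable.comp
      (hρm.mul ((hθcont.pow 2).measurable))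
  have hbnd_cont : Continuous (fun x => (M * θ x ^ 2) ^ a) :=
    (continuous_const.mul (hθcont.pow 2)).rpow_const fun x => Or.inr ha0.le
  have hbnd_supp : HasCompactSupport (fun x => (M * θ x ^ 2) ^ a) := by
    have : ((fun y : ℝ => (M * y ^ 2) ^ a) ∘ θ) = fun x => (M * θ x ^ 2) ^ a := rfl
    rw [← this]
    exact hθsupp.comp_left (by simp [Real.zero_rpow ha0.ne'])
  have hfle : ∀ x, f x ≤ (M * θ x ^ 2) ^ a := fun x =>
    Real.rpow_le_rpow (mul_nonneg (hρ0 x) (sq_nonneg _))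
      (mul_le_mul_of_nonneg_right (hρM x) (sq_nonneg _)) ha0.le
  have hfmem : MemLp f (ENNReal.ofReal (1/a)) volume := by
    refine MemLp.of_le (hbnd_cont.memLp_of_hasCompactSupport hbnd_supp)
      hfmeas.aestronglyMeasurable
      (Filter.Eventually.of_forall fun x => ?_)
    rw [Real.norm_eq_abs, abs_of_nonneg (hf0 x)]
    exact (hfle x).trans (le_abs_self _)
  have hgmem : MemLp g (ENNReal.ofReal (1/b)) volume := hpowmem e he0 _
  -- outer Hoelder
  have hconj1 : (1/a).HolderConjugate (1/b) := by
    rw [Real.holderConjugate_iff]; constructor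
    · rw [lt_div_iff₀ ha0]; linarith
    · rw [one_div, one_div, inv_inv, inv_inv]; linarith
  have hH1 := integral_mul_le_Lp_mul_Lq_of_nonneg hconj1
    (Filter.Eventually.of_forall hf0) (Filter.Eventually.of_forall hg0) hfmem hgmem
  have hfpow : (∫ x : E3, f x ^ (1/a)) = B := by
    rw [hBdef]
    refine integral_congr_ae (Filter.Eventually.of_forall fun x => ?_)
    show ((ρ x * θ x ^ 2) ^ a) ^ (1/a) = _
    rw [one_div, ← Real.rpow_mul (mul_nonneg (hρ0 x) (sq_nonneg _)),
      mul_inv_cancel₀ ha0.ne', Real.rpow_one]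
  have hgpow : (∫ x : E3, g x ^ (1/b)) = J := by
    rw [hJdef]
    refine integral_congr_ae (Filter.Eventually.of_forall fun x => ?_)
    show (θ x ^ e) ^ (1/b) = _
    rw [← Real.rpow_mul (hθ0 x)]
    congr 1
    rw [hedef, hbdef]
    field_simp
  rw [hfpow, hgpow, one_div_one_div, one_div_one_div] at hH1
  -- inner Hoelder
  have hconj2 : (3/2 : ℝ).HolderConjugate 3 := by rw [Real.holderConjugate_iff]; constructor <;> norm_num
  have hH2 := integral_mul_le_Lp_mul_Lq_of_nonneg hconj2
    (f := fun x => θ x ^ (2*q/3)) (g := fun x => θ x ^ (2:ℝ))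
    (Filter.Eventually.of_forall fun x => Real.rpow_nonneg (hθ0 x) _)
    (Filter.Eventually.of_forall fun x => Real.rpow_nonneg (hθ0 x) _)
    (hpowmem _ (by positivity) _) (hpowmem _ (by norm_num) _)
  have hJsplit : J = ∫ x : E3, θ x ^ (2*q/3) * θ x ^ (2:ℝ) := by
    rw [hJdef]
    exact integral_congr_ae (Filter.Eventually.of_forall fun x =>
      Real.rpow_add' (hθ0 x) (by positivity))
  have hH2a : (∫ x : E3, (θ x ^ (2*q/3)) ^ (3/2:ℝ)) = Iq := by
    rw [hIqdef]
    refine integral_congr_ae (Filter.Eventually.of_forall fun x => ?_)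
    show (θ x ^ (2*q/3)) ^ (3/2:ℝ) = θ x ^ q
    rw [← Real.rpow_mul (hθ0 x)]
    congr 1
    field_simp
  have hH2b : (∫ x : E3, (θ x ^ (2:ℝ)) ^ (3:ℝ)) = I6 := by
    rw [hI6def]
    refine integral_congr_ae (Filter.Eventually.of_forall fun x => ?_)
    show (θ x ^ (2:ℝ)) ^ (3:ℝ) = θ x ^ (6:ℝ)
    rw [← Real.rpow_mul (hθ0 x)]
    norm_num
  rw [hH2a, hH2b] at hH2
  have hJle : J ≤ Iq ^ (2/3:ℝ) * I6 ^ (1/3:ℝ) := by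
    rw [hJsplit]
    have h23 : (1:ℝ)/(3/2) = 2/3 := by norm_num
    rw [← h23]
    exact hH2
  -- raise to power b
  have hJb : J ^ b ≤ Iq ^ (1/q) * I6 ^ (1/(2*q)) := by
    calc J ^ b ≤ (Iq ^ (2/3:ℝ) * I6 ^ (1/3:ℝ)) ^ b :=
          Real.rpow_le_rpow hJ0 hJle hb0.le
      _ = Iq ^ ((2/3:ℝ)*b) * I6 ^ ((1/3:ℝ)*b) := by
          rw [Real.mul_rpow (Real.rpow_nonneg hIq0 _) (Real.rpow_nonneg hI60 _),
            ← Real.rpow_mul hIq0, ← Real.rpow_mul hI60]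
      _ = Iq ^ (1/q) * I6 ^ (1/(2*q)) := by
          have e1 : (2/3:ℝ)*b = 1/q := by rw [hbdef]; ring
          have e2 : (1/3:ℝ)*b = 1/(2*q) := by rw [hbdef]; ring
          rw [e1, e2]
  -- Sobolev
  have hI6' : (∫ x : E3, ‖θ x‖ ^ (6:ℝ)) = I6 := by
    rw [hI6def]
    refine integral_congr_ae (Filter.Eventually.of_forall fun x => ?_)
    show ‖θ x‖ ^ (6:ℝ) = θ x ^ (6:ℝ)
    rw [Real.norm_eq_abs, abs_of_nonneg (hθ0 x)]
  have hsob' : I6 ^ ((6:ℝ)⁻¹) ≤ S * G ^ ((2:ℝ)⁻¹) := by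
    have := hsob θ hθC hθsupp
    rwa [hI6', ← hGdef] at this
  have hsb : I6 ^ (1/(2*q)) ≤ S ^ (3/q) * G ^ b := by
    have h1 : I6 ^ (1/(2*q)) = (I6 ^ ((6:ℝ)⁻¹)) ^ (3/q) := by
      rw [← Real.rpow_mul hI60]
      congr 1
      ring
    rw [h1]
    calc (I6 ^ ((6:ℝ)⁻¹)) ^ (3/q) ≤ (S * G ^ ((2:ℝ)⁻¹)) ^ (3/q) :=
          Real.rpow_le_rpow (Real.rpow_nonneg hI60 _) hsob' (by positivity)
      _ = S ^ (3/q) * G ^ b := by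
          rw [Real.mul_rpow hS0.le (Real.rpow_nonneg hG0 _), ← Real.rpow_mul hG0]
          have e3 : (2:ℝ)⁻¹ * (3/q) = b := by rw [hbdef]; ring
          rw [e3]
  -- step 1 : pointwise bound and integration
  have pw : ∀ x, ρ x * θ x ^ 3 ≤ M ^ b * (f x * g x) := by
    intro x
    rcases (hρ0 x).eq_or_lt with h | h
    · simp only [hfdef, ← h, zero_mul, Real.zero_rpow ha0.ne', mul_zero]
      exact le_rfl
    · have h1 : ρ x = ρ x ^ a * ρ x ^ b := by
        rw [← Real.rpow_add h, hab, Real.rpow_one]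
      have h3 : (3:ℝ) = 2*a + e := by
        rw [hadef, hbdef, hedef]
        field_simp
        ring
      have h2 : θ x ^ (3:ℕ) = θ x ^ (2*a) * θ x ^ e := by
        rw [← Real.rpow_natCast (θ x) 3]
        push_cast
        rw [h3, Real.rpow_add' (hθ0 x) (by rw [← h3]; norm_num)]
      have h4 : f x = ρ x ^ a * θ x ^ (2*a) := by
        show (ρ x * θ x ^ 2) ^ a = _
        rw [Real.mul_rpow (hρ0 x) (sq_nonneg _), ← Real.rpow_natCast (θ x) 2,
          ← Real.rpow_mul (hθ0 x)]
        norm_num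
      have hle : ρ x ^ b ≤ M ^ b := Real.rpow_le_rpow (hρ0 x) (hρM x) hb0.le
      have heq : ρ x * θ x ^ 3 = ρ x ^ b * (f x * g x) := by
        rw [h4, hgdef]
        calc ρ x * θ x ^ 3 = (ρ x ^ a * ρ x ^ b) * (θ x ^ (2*a) * θ x ^ e) := by
              rw [← h1, ← h2]
          _ = ρ x ^ b * (ρ x ^ a * θ x ^ (2*a) * θ x ^ e) := by ring
      rw [heq]
      exact mul_le_mul_of_nonneg_right hle
        (mul_nonneg (hf0 x) (hg0 x))
  have hdom_cont : Continuous (fun x => M ^ b * ((M * θ x ^ 2) ^ a * θ x ^ e)) :=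
    continuous_const.mul (hbnd_cont.mul (hpowcont e he0))
  have hdom_supp : HasCompactSupport (fun x => M ^ b * ((M * θ x ^ 2) ^ a * θ x ^ e)) := by
    have h := (hbnd_supp.mul_right (f' := fun x => θ x ^ e))
    exact h.mul_left (f := fun _ : E3 => M ^ b)
  have hdom_int : Integrable (fun x => M ^ b * ((M * θ x ^ 2) ^ a * θ x ^ e)) volume :=
    hdom_cont.integrable_of_hasCompactSupport hdom_supp
  have hfg_int : Integrable (fun x => M ^ b * (f x * g x)) volume := by
    refine hdom_int.mono' ?_ (Filter.Eventually.of_forall fun x => ?_)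
    · exact (measurable_const.mul (hfmeas.mul
        ((hpowcont e he0).measurable))).aestronglyMeasurable
    · rw [Real.norm_eq_abs, abs_of_nonneg
        (mul_nonneg (by positivity) (mul_nonneg (hf0 x) (hg0 x)))]
      exact mul_le_mul_of_nonneg_left
        (mul_le_mul_of_nonneg_right (hfle x) (hg0 x)) (by positivity)
  have hstep1 : (∫ x : E3, ρ x * θ x ^ 3) ≤ M ^ b * ∫ x : E3, f x * g x := by
    calc (∫ x : E3, ρ x * θ x ^ 3) ≤ ∫ x : E3, M ^ b * (f x * g x) :=
          integral_mono_of_nonneg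
            (Filter.Eventually.of_forall fun x =>
              mul_nonneg (hρ0 x) (pow_nonneg (hθ0 x) 3))
            hfg_int (Filter.Eventually.of_forall pw)
      _ = M ^ b * ∫ x : E3, f x * g x := integral_const_mul _ _
  -- combine
  have hMb : (0:ℝ) ≤ M ^ b := Real.rpow_nonneg hM.le _
  have hchain : (∫ x : E3, ρ x * θ x ^ 3)
      ≤ M ^ b * (B ^ a * (Iq ^ (1/q) * (S ^ (3/q) * G ^ b))) := by
    have hmid : B ^ a * J ^ b ≤ B ^ a * (Iq ^ (1/q) * (S ^ (3/q) * G ^ b)) := by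
      refine mul_le_mul_of_nonneg_left ?_ (Real.rpow_nonneg hB0 _)
      exact hJb.trans (mul_le_mul_of_nonneg_left hsb hLq0)
    exact hstep1.trans (mul_le_mul_of_nonneg_left (hH1.trans hmid) hMb)
  -- Young's inequality step
  set X : ℝ := Iq ^ (1/q) with hXdef
  have hX0 : 0 ≤ X := hLq0
  set u : ℝ := c * (M ^ b * S ^ (3/q) * X * B ^ a) with hudef
  set v : ℝ := G ^ b / c with hvdef
  have hW0 : 0 ≤ M ^ b * S ^ (3/q) * X * B ^ a :=
    mul_nonneg (mul_nonneg (mul_nonneg hMb (Real.rpow_nonneg hS0.le _)) hX0)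
      (Real.rpow_nonneg hB0 _)
  have hu0 : 0 ≤ u := by rw [hudef]; exact mul_nonneg hc0.le hW0
  have hv0 : 0 ≤ v := by
    rw [hvdef]; exact div_nonneg (Real.rpow_nonneg hG0 _) hc0.le
  have hyoung := Real.young_inequality_of_nonneg hu0 hv0 hconj1
  have huv : u * v = M ^ b * (B ^ a * (X * (S ^ (3/q) * G ^ b))) := by
    rw [hudef, hvdef]
    field_simp
  have hMba : (M ^ b) ^ (1/a) = M ^ (b/a) := by
    rw [← Real.rpow_mul hM.le]; congr 1; ring
  have hSba : (S ^ (3/q)) ^ (1/a) = S ^ (3/(q*a)) := by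
    rw [← Real.rpow_mul hS0.le]; congr 1; field_simp
  have hBa : (B ^ a) ^ (1/a) = B := by
    rw [← Real.rpow_mul hB0, mul_one_div, div_self ha0.ne', Real.rpow_one]
  have hupow : u ^ (1/a) = c ^ (1/a) * (M ^ (b/a) * S ^ (3/(q*a)) * X ^ (1/a) * B) := by
    rw [hudef, Real.mul_rpow hc0.le hW0,
      Real.mul_rpow (mul_nonneg (mul_nonneg hMb (Real.rpow_nonneg hS0.le _)) hX0)
        (Real.rpow_nonneg hB0 _),
      Real.mul_rpow (mul_nonneg hMb (Real.rpow_nonneg hS0.le _)) hX0,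
      Real.mul_rpow hMb (Real.rpow_nonneg hS0.le _), hMba, hSba, hBa]
    try ring
  have hvpow : v ^ (1/b) = G / (b/η) := by
    rw [hvdef, Real.div_rpow (Real.rpow_nonneg hG0 _) hc0.le,
      ← Real.rpow_mul hG0, mul_one_div, div_self hb0.ne', Real.rpow_one,
      hcdef, ← Real.rpow_mul (by positivity), mul_one_div, div_self hb0.ne',
      Real.rpow_one]
  have hyoung2 : u * v ≤ a * u ^ (1/a) + η * G := by
    have h1 : u ^ (1/a) / (1/a) = a * u ^ (1/a) := by
      rw [div_div_eq_mul_div, div_one, mul_comm]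
    have h2 : v ^ (1/b) / (1/b) = η * G := by
      rw [hvpow, div_div_eq_mul_div, div_one]
      field_simp
    calc u * v ≤ u ^ (1/a) / (1/a) + v ^ (1/b) / (1/b) := hyoung
      _ = a * u ^ (1/a) + η * G := by rw [h1, h2]
  have hCX : a * u ^ (1/a) = C * X ^ (1/a) * B := by
    rw [hupow, hCdef]
    ring
  -- finish
  have hexp : (1:ℝ)/a = 2 * q / (2 * q - 3) := by
    rw [hadef, hbdef]
    rw [div_eq_div_iff (by positivity) (by linarith)]
    field_simp
    try ring
  have hfinal : (∫ x : E3, ρ x * θ x ^ 3) ≤ C * X ^ (1/a) * B + η * G := by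
    calc (∫ x : E3, ρ x * θ x ^ 3)
        ≤ M ^ b * (B ^ a * (X * (S ^ (3/q) * G ^ b))) := hchain
      _ = u * v := huv.symm
      _ ≤ a * u ^ (1/a) + η * G := hyoung2
      _ = C * X ^ (1/a) * B + η * G := by rw [hCX]
  rw [hLq, ← hexp]
  exact hfinal
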